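/- Leibniz-type ℒᵖ estimate for the graph Laplacian: for 1 ≤ p ≤ ∞ with conjugate exponent q (1/p + 1/q = 1), and signals x, y on a graph with symmetric Laplacian L, ‖L(x·y)‖_{ℒᵖ(G)} ≤ ‖Lx‖_{ℒᵖ(G)} ‖y‖_{ℒ^∞(G)} + ‖x‖_{ℒᵖ(G)} ‖L_S y‖_{ℒ^∞(G)} + ‖∇_L x‖_{ℒᵖ(E)} ‖∇_L y‖_{ℒ^{∞,q}(E)}. -/

import Mathlib

open Matrix
open scoped ENNReal

/-- `ℒᵖ` norm of a signal on the vertices (`max` for `p = ∞`). -/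
noncomputable def lpVert {n : ℕ} (p : ℝ≥0∞) (x : Fin n → ℝ) : ℝ :=
  if p = ∞ then ⨆ i, |x i| else (∑ i, |x i| ^ p.toReal) ^ (1 / p.toReal)

/-- `ℒᵖ` norm of a function on a (directed) edge set `E`. -/
noncomputable def lpEdge {n : ℕ} (p : ℝ≥0∞) (E : Finset (Fin n × Fin n))
    (z : Fin n × Fin n → ℝ) : ℝ :=
  if p = ∞ then ⨆ e : E, |z e| else (∑ e ∈ E, |z e| ^ p.toReal) ^ (1 / p.toReal)

/-- Hybrid norm `‖z‖_{ℒ^{∞,q}(E)} = max_i (∑_{i' : (i,i') ∈ E} |z(i,i')|^q)^{1/q}`. -/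
noncomputable def lpHybrid {n : ℕ} (q : ℝ≥0∞) (E : Finset (Fin n × Fin n))
    (z : Fin n × Fin n → ℝ) : ℝ :=
  ⨆ i : Fin n, lpEdge q (E.filter fun e => e.1 = i) z

namespace LeibnizAux

lemma lpVert_nonneg {n : ℕ} (p : ℝ≥0∞) (x : Fin n → ℝ) : 0 ≤ lpVert p x := by
  unfold lpVert
  split
  · exact Real.iSup_nonneg fun i => abs_nonneg _
  · exact Real.rpow_nonneg (Finset.sum_nonneg fun i _ => Real.rpow_nonneg (abs_nonneg _) _) _

lemma lpEdge_nonneg {n : ℕ} (p : ℝ≥0∞) (E : Finset (Fin n × Fin n))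
    (z : Fin n × Fin n → ℝ) : 0 ≤ lpEdge p E z := by
  unfold lpEdge
  split
  · exact Real.iSup_nonneg fun i => abs_nonneg _
  · exact Real.rpow_nonneg (Finset.sum_nonneg fun i _ => Real.rpow_nonneg (abs_nonneg _) _) _

lemma lpHybrid_nonneg {n : ℕ} (q : ℝ≥0∞) (E : Finset (Fin n × Fin n))
    (z : Fin n × Fin n → ℝ) : 0 ≤ lpHybrid q E z :=
  Real.iSup_nonneg fun i => lpEdge_nonneg _ _ _

lemma abs_le_lpVert_top {n : ℕ} (x : Fin n → ℝ) (i : Fin n) : |x i| ≤ lpVert ∞ x := by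
  unfold lpVert
  rw [if_pos rfl]
  exact le_ciSup (f := fun i => |x i|) (Set.Finite.bddAbove (Set.finite_range _)) i

lemma lpVert_mono {n : ℕ} (p : ℝ≥0∞) {f g : Fin n → ℝ} (h : ∀ i, |f i| ≤ |g i|) :
    lpVert p f ≤ lpVert p g := by
  unfold lpVert
  split
  · apply ciSup_mono
    · exact Set.Finite.bddAbove (Set.finite_range _)
    · exact h
  · refine Real.rpow_le_rpow (Finset.sum_nonneg fun i _ => Real.rpow_nonneg (abs_nonneg _) _)
      (Finset.sum_le_sum fun i _ => Real.rpow_le_rpow (abs_nonneg _) (h i) ENNReal.toReal_nonneg)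
      (by positivity)

lemma lpEdge_filter_le_hybrid {n : ℕ} (q : ℝ≥0∞) (E : Finset (Fin n × Fin n))
    (z : Fin n × Fin n → ℝ) (i : Fin n) :
    lpEdge q (E.filter fun e => e.1 = i) z ≤ lpHybrid q E z :=
  le_ciSup (f := fun i => lpEdge q (E.filter fun e => e.1 = i) z)
    (Set.Finite.bddAbove (Set.finite_range _)) i

end LeibnizAux

namespace LeibnizAux

lemma toReal_one_le {p : ℝ≥0∞} (hp : 1 ≤ p) (hfin : p ≠ ∞) : 1 ≤ p.toReal := by
  rw [← ENNReal.toReal_one]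
  exact (ENNReal.toReal_le_toReal (by simp) hfin).mpr hp

lemma holder_edge {n : ℕ} (p q : ℝ≥0∞) (hp : 1 ≤ p) (hpq : p⁻¹ + q⁻¹ = 1)
    (s : Finset (Fin n × Fin n)) (u v : Fin n × Fin n → ℝ) :
    ∑ e ∈ s, |u e| * |v e| ≤ lpEdge p s u * lpEdge q s v := by
  by_cases hpt : p = ∞
  · have hq : q = 1 := by
      rw [hpt, ENNReal.inv_top, zero_add] at hpq
      exact ENNReal.inv_eq_one.mp hpq
    subst hpt hq
    unfold lpEdge
    rw [if_pos rfl, if_neg (by simp), ENNReal.toReal_one]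
    simp only [Real.rpow_one, one_div_one]
    calc ∑ e ∈ s, |u e| * |v e| ≤ ∑ e ∈ s, (⨆ e : s, |u e|) * |v e| := by
          refine Finset.sum_le_sum fun e he => mul_le_mul_of_nonneg_right ?_ (abs_nonneg _)
          exact le_ciSup (f := fun e : s => |u e|) (Set.Finite.bddAbove (Set.finite_range _)) ⟨e, he⟩
      _ = (⨆ e : s, |u e|) * ∑ e ∈ s, |v e| := by rw [← Finset.mul_sum]
  by_cases hqt : q = ∞
  · have hp1 : p = 1 := by
      rw [hqt, ENNReal.inv_top, add_zero] at hpq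
      exact ENNReal.inv_eq_one.mp hpq
    subst hqt hp1
    unfold lpEdge
    rw [if_pos rfl, if_neg (by simp), ENNReal.toReal_one]
    simp only [Real.rpow_one, one_div_one]
    calc ∑ e ∈ s, |u e| * |v e| ≤ ∑ e ∈ s, |u e| * (⨆ e : s, |v e|) := by
          refine Finset.sum_le_sum fun e he => mul_le_mul_of_nonneg_left ?_ (abs_nonneg _)
          exact le_ciSup (f := fun e : s => |v e|) (Set.Finite.bddAbove (Set.finite_range _)) ⟨e, he⟩
      _ = (∑ e ∈ s, |u e|) * (⨆ e : s, |v e|) := by rw [← Finset.sum_mul]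
  · have hpne1 : p ≠ 1 := by
      intro h
      rw [h, inv_one] at hpq
      have h0 : (1:ℝ≥0∞) + q⁻¹ = 1 + 0 := by rw [add_zero]; exact hpq
      have : q⁻¹ = 0 := (ENNReal.add_right_inj (by simp)).mp h0
      exact hqt (ENNReal.inv_eq_zero.mp this)
    have hp1 : 1 < p := lt_of_le_of_ne hp (Ne.symm hpne1)
    have hpr : 1 < p.toReal := by
      rw [← ENNReal.toReal_one]
      exact (ENNReal.toReal_lt_toReal (by simp) hpt).mpr hp1
    have hsum : p.toReal⁻¹ + q.toReal⁻¹ = 1 := by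
      have hpinv : p⁻¹ ≠ ∞ := by
        rw [ENNReal.inv_ne_top]
        exact fun h => by simp [h] at hp1
      have hqinv : q⁻¹ ≠ ∞ := by
        rw [ENNReal.inv_ne_top]
        intro h
        rw [h] at hpq; simp at hpq
      have := congrArg ENNReal.toReal hpq
      rwa [ENNReal.toReal_add hpinv hqinv, ENNReal.toReal_inv, ENNReal.toReal_inv,
        ENNReal.toReal_one] at this
    have hconj : Real.HolderConjugate p.toReal q.toReal := Real.holderConjugate_iff.mpr ⟨hpr, hsum⟩
    unfold lpEdge
    rw [if_neg hpt, if_neg hqt]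
    calc ∑ e ∈ s, |u e| * |v e|
        ≤ (∑ e ∈ s, |u e| ^ p.toReal) ^ (1 / p.toReal) *
          (∑ e ∈ s, |v e| ^ q.toReal) ^ (1 / q.toReal) :=
          Real.inner_le_Lp_mul_Lq_of_nonneg s hconj (fun e _ => abs_nonneg _)
            (fun e _ => abs_nonneg _)

end LeibnizAux

namespace LeibnizAux

lemma real_ciSup_empty {ι : Sort*} [IsEmpty ι] (f : ι → ℝ) : ⨆ i, f i = 0 := by
  rw [iSup_of_empty', Real.sSup_empty]

lemma lpVert_empty {n : ℕ} [IsEmpty (Fin n)] {p : ℝ≥0∞} (hp : 1 ≤ p) (f : Fin n → ℝ) :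
    lpVert p f = 0 := by
  unfold lpVert
  split
  · rw [real_ciSup_empty]
  · next hfin =>
    have h1 := toReal_one_le hp hfin
    rw [Finset.univ_eq_empty, Finset.sum_empty, Real.zero_rpow (by positivity)]

lemma lpVert_add3_le {n : ℕ} (p : ℝ≥0∞) (hp : 1 ≤ p) (f g h : Fin n → ℝ)
    (hf : ∀ i, 0 ≤ f i) (hg : ∀ i, 0 ≤ g i) (hh : ∀ i, 0 ≤ h i) :
    lpVert p (fun i => f i + g i + h i) ≤ lpVert p f + lpVert p g + lpVert p h := by
  by_cases hfin : p = ∞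
  · subst hfin
    rcases isEmpty_or_nonempty (Fin n) with hne | hne
    · rw [lpVert_empty hp, lpVert_empty hp, lpVert_empty hp, lpVert_empty hp]; norm_num
    · unfold lpVert
      rw [if_pos rfl]
      refine ciSup_le fun i => ?_
      rw [abs_of_nonneg (add_nonneg (add_nonneg (hf i) (hg i)) (hh i))]
      have h1 : f i ≤ lpVert ∞ f := le_trans (le_abs_self _) (abs_le_lpVert_top f i)
      have h2 : g i ≤ lpVert ∞ g := le_trans (le_abs_self _) (abs_le_lpVert_top g i)
      have h3 : h i ≤ lpVert ∞ h := le_trans (le_abs_self _) (abs_le_lpVert_top h i)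
      unfold lpVert at h1 h2 h3
      rw [if_pos rfl] at h1 h2 h3
      exact add_le_add (add_le_add h1 h2) h3
  · have hpt : 1 ≤ p.toReal := toReal_one_le hp hfin
    unfold lpVert
    simp only [if_neg hfin]
    calc (∑ i, |f i + g i + h i| ^ p.toReal) ^ (1 / p.toReal)
        ≤ (∑ i, |f i + g i| ^ p.toReal) ^ (1 / p.toReal) +
            (∑ i, |h i| ^ p.toReal) ^ (1 / p.toReal) :=
          Real.Lp_add_le Finset.univ (fun i => f i + g i) h hpt
      _ ≤ ((∑ i, |f i| ^ p.toReal) ^ (1 / p.toReal) +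
            (∑ i, |g i| ^ p.toReal) ^ (1 / p.toReal)) +
            (∑ i, |h i| ^ p.toReal) ^ (1 / p.toReal) :=
          add_le_add_left (Real.Lp_add_le Finset.univ f g hpt) _

lemma lpVert_mul_const_le {n : ℕ} (p : ℝ≥0∞) (hp : 1 ≤ p) (f : Fin n → ℝ) {c : ℝ}
    (hc : 0 ≤ c) : lpVert p (fun i => f i * c) ≤ lpVert p f * c := by
  by_cases hfin : p = ∞
  · subst hfin
    rcases isEmpty_or_nonempty (Fin n) with hne | hne
    · rw [lpVert_empty hp]
      exact mul_nonneg (lpVert_nonneg _ _) hc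
    · unfold lpVert
      rw [if_pos rfl]
      refine ciSup_le fun i => ?_
      rw [abs_mul, abs_of_nonneg hc]
      refine mul_le_mul_of_nonneg_right ?_ hc
      exact le_ciSup (f := fun i => |f i|) (Set.Finite.bddAbove (Set.finite_range _)) i
  · have hpt0 : p.toReal ≠ 0 := by
      have := toReal_one_le hp hfin; linarith
    unfold lpVert
    simp only [if_neg hfin]
    have : ∀ i : Fin n, |f i * c| ^ p.toReal = |f i| ^ p.toReal * c ^ p.toReal := by
      intro i
      rw [abs_mul, abs_of_nonneg hc, Real.mul_rpow (abs_nonneg _) hc]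
    rw [Finset.sum_congr rfl fun i _ => this i, ← Finset.sum_mul,
      Real.mul_rpow (Finset.sum_nonneg fun i _ => Real.rpow_nonneg (abs_nonneg _) _)
        (Real.rpow_nonneg hc _), one_div, Real.rpow_rpow_inv hc hpt0]

lemma row_norms_le {n : ℕ} (p : ℝ≥0∞) (hp : 1 ≤ p) (E : Finset (Fin n × Fin n))
    (u : Fin n × Fin n → ℝ) :
    lpVert p (fun i => lpEdge p (E.filter fun e => e.1 = i) u) ≤ lpEdge p E u := by
  by_cases hfin : p = ∞
  · subst hfin
    rcases isEmpty_or_nonempty (Fin n) with hne | hne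
    · rw [lpVert_empty hp]; exact lpEdge_nonneg _ _ _
    · unfold lpVert
      rw [if_pos rfl]
      refine ciSup_le fun i => ?_
      rw [abs_of_nonneg (lpEdge_nonneg _ _ _)]
      unfold lpEdge
      rw [if_pos rfl, if_pos rfl]
      rcases isEmpty_or_nonempty ((E.filter fun e => e.1 = i) : Finset _) with he | he
      · rw [real_ciSup_empty (fun e : (E.filter fun e => e.1 = i) => |u e|)]
        exact Real.iSup_nonneg fun e => abs_nonneg _
      · refine ciSup_le fun e => ?_
        exact le_ciSup (f := fun e : E => |u e|) (Set.Finite.bddAbove (Set.finite_range _))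
          ⟨e.1, Finset.mem_of_mem_filter _ e.2⟩
  · have hpt0 : p.toReal ≠ 0 := by
      have := toReal_one_le hp hfin; linarith
    unfold lpVert lpEdge
    simp only [if_neg hfin]
    have hstep : ∀ i : Fin n,
        |(∑ e ∈ E.filter (fun e => e.1 = i), |u e| ^ p.toReal) ^ (1 / p.toReal)| ^ p.toReal
          = ∑ e ∈ E.filter (fun e => e.1 = i), |u e| ^ p.toReal := by
      intro i
      rw [abs_of_nonneg (by positivity), one_div,
        Real.rpow_inv_rpow (Finset.sum_nonneg fun e _ => Real.rpow_nonneg (abs_nonneg _) _) hpt0]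
    rw [Finset.sum_congr rfl fun i _ => hstep i,
      Finset.sum_fiberwise E (fun e => e.1) (fun e => |u e| ^ p.toReal)]

end LeibnizAux

/-- Leibniz-type `ℒᵖ` estimate for a symmetric graph Laplacian `L` (with
`A_{i,i'} = -L_{i,i'}` off the diagonal, standard Laplacian `L_S = D - A`, and conjugate
exponents `1/p + 1/q = 1`):
`‖L(x·y)‖_p ≤ ‖Lx‖_p ‖y‖_∞ + ‖x‖_p ‖L_S y‖_∞ + ‖∇_L x‖_{ℒᵖ(E)} ‖∇_L y‖_{ℒ^{∞,q}(E)}`. -/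
theorem laplacian_leibniz_lp_estimate
    {n : ℕ} (L : Matrix (Fin n) (Fin n) ℝ) (hsymm : L.IsSymm)
    (hoff : ∀ i j, i ≠ j → L i j ≤ 0)
    (p q : ℝ≥0∞) (hp : 1 ≤ p) (hpq : p⁻¹ + q⁻¹ = 1)
    (x y : Fin n → ℝ) :
    let A : Matrix (Fin n) (Fin n) ℝ := Matrix.of fun a b => if a ≠ b then -L a b else 0
    let LS : Matrix (Fin n) (Fin n) ℝ := Matrix.diagonal (fun a => ∑ b, A a b) - A
    let E : Finset (Fin n × Fin n) := Finset.univ.filter fun e => A e.1 e.2 ≠ 0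
    let grad : (Fin n → ℝ) → Fin n × Fin n → ℝ :=
      fun z e => Real.sqrt (A e.1 e.2) * (z e.1 - z e.2)
    lpVert p (L.mulVec (x * y)) ≤
      lpVert p (L.mulVec x) * lpVert ∞ y + lpVert p x * lpVert ∞ (LS.mulVec y) +
        lpEdge p E (grad x) * lpHybrid q E (grad y) := by
  intro A LS E grad
  have hAdef : ∀ a b, A a b = if a ≠ b then -L a b else 0 := fun a b => rfl
  have hA : ∀ a b, 0 ≤ A a b := by
    intro a b
    rw [hAdef]
    by_cases h : a ≠ b
    · rw [if_pos h]; linarith [hoff a b h]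
    · rw [if_neg h]
  have sumL : ∀ (t : Fin n → ℝ) (i : Fin n),
      ∑ j, L i j * t j = L i i * t i - ∑ j, A i j * t j := by
    intro t i
    have hterm : ∀ j : Fin n, L i j * t j + A i j * t j = if j = i then L i i * t i else 0 := by
      intro j
      by_cases h : j = i
      · subst h
        rw [if_pos rfl, hAdef]
        simp
      · have hne : i ≠ j := fun hh => h hh.symm
        rw [if_neg h, hAdef, if_pos hne]
        ring
    have := Finset.sum_congr rfl (fun j (_ : j ∈ Finset.univ) => hterm j)
    rw [Finset.sum_add_distrib, Finset.sum_ite_eq' Finset.univ i (fun j => L i i * t i)] at this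
    rw [if_pos (Finset.mem_univ i)] at this
    linarith
  have hmv : ∀ (t : Fin n → ℝ) (i : Fin n), L.mulVec t i = ∑ j, L i j * t j := by
    intro t i
    simp [Matrix.mulVec, dotProduct]
  have key : ∀ i, L.mulVec (x * y) i =
      y i * L.mulVec x i + x i * LS.mulVec y i -
        ∑ j, A i j * ((x i - x j) * (y i - y j)) := by
    intro i
    have e1 : L.mulVec (x * y) i = L i i * (x i * y i) - ∑ j, A i j * (x j * y j) := by
      rw [hmv]
      exact sumL (x * y) i
    have e2 : L.mulVec x i = L i i * x i - ∑ j, A i j * x j := by rw [hmv]; exact sumL x i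
    have e3 : LS.mulVec y i = (∑ j, A i j) * y i - ∑ j, A i j * y j := by
      show (Matrix.diagonal (fun a => ∑ b, A a b) - A).mulVec y i = _
      rw [Matrix.sub_mulVec]
      have h1 : ((Matrix.diagonal fun a => ∑ b, A a b) *ᵥ y) i = (∑ j, A i j) * y i :=
        Matrix.mulVec_diagonal _ _ _
      have h2 : (A *ᵥ y) i = ∑ j, A i j * y j := by simp [Matrix.mulVec, dotProduct]
      rw [Pi.sub_apply, h1, h2]
    have e4 : ∑ j, A i j * ((x i - x j) * (y i - y j)) =
        (∑ j, A i j) * (x i * y i) - x i * (∑ j, A i j * y j) - y i * (∑ j, A i j * x j)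
          + ∑ j, A i j * (x j * y j) := by
      rw [Finset.sum_mul, Finset.mul_sum, Finset.mul_sum, ← Finset.sum_sub_distrib,
        ← Finset.sum_sub_distrib, ← Finset.sum_add_distrib]
      exact Finset.sum_congr rfl fun j _ => by ring
    rw [e1, e2, e3, e4]
    ring
  have hgrad : ∀ (z : Fin n → ℝ) (e : Fin n × Fin n), grad z e = Real.sqrt (A e.1 e.2) * (z e.1 - z e.2) :=
    fun z e => rfl
  have edgeSum : ∀ i, ∑ e ∈ E.filter (fun e => e.1 = i), grad x e * grad y e
      = ∑ j, A i j * ((x i - x j) * (y i - y j)) := by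
    intro i
    rw [← Finset.sum_filter_of_ne (s := Finset.univ) (p := fun j => A i j ≠ 0)
      (f := fun j => A i j * ((x i - x j) * (y i - y j)))
      (fun j _ h h0 => h (by show A i j * _ = 0; rw [h0, zero_mul]))]
    refine Finset.sum_nbij' (fun e => e.2) (fun j => (i, j)) ?_ ?_ ?_ ?_ ?_
    · intro e he
      rw [Finset.mem_filter] at he ⊢
      obtain ⟨heE, he1⟩ := he
      rw [Finset.mem_filter] at heE
      refine ⟨Finset.mem_univ _, ?_⟩
      rw [← he1]
      exact heE.2
    · intro j hj
      rw [Finset.mem_filter] at hj ⊢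
      exact ⟨by rw [Finset.mem_filter]; exact ⟨Finset.mem_univ _, hj.2⟩, rfl⟩
    · intro e he
      rw [Finset.mem_filter] at he
      rw [← he.2]
    · intro j _
      rfl
    · intro e he
      rw [Finset.mem_filter] at he
      obtain ⟨_, he1⟩ := he
      rw [hgrad, hgrad, he1, mul_mul_mul_comm,
        Real.mul_self_sqrt (by rw [← he1]; exact hA e.1 e.2), ← he1]
  set C1 := lpVert ∞ y with hC1
  set C2 := lpVert ∞ (LS.mulVec y) with hC2
  set H := lpHybrid q E (grad y) with hH
  set r : Fin n → ℝ := fun i => lpEdge p (E.filter fun e => e.1 = i) (grad x) with hr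
  have hC1n : 0 ≤ C1 := LeibnizAux.lpVert_nonneg _ _
  have hC2n : 0 ≤ C2 := LeibnizAux.lpVert_nonneg _ _
  have hHn : 0 ≤ H := LeibnizAux.lpHybrid_nonneg _ _ _
  have hrn : ∀ i, 0 ≤ r i := fun i => LeibnizAux.lpEdge_nonneg _ _ _
  have hbound : ∀ i, |L.mulVec (x * y) i| ≤ |L.mulVec x i| * C1 + |x i| * C2 + r i * H := by
    intro i
    rw [key i]
    refine le_trans (abs_sub _ _) (add_le_add (le_trans (abs_add_le _ _) (add_le_add ?_ ?_)) ?_)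
    · rw [abs_mul, mul_comm]
      exact mul_le_mul_of_nonneg_left (LeibnizAux.abs_le_lpVert_top y i) (abs_nonneg _)
    · rw [abs_mul]
      exact mul_le_mul_of_nonneg_left (LeibnizAux.abs_le_lpVert_top (LS.mulVec y) i) (abs_nonneg _)
    · rw [← edgeSum i]
      calc |∑ e ∈ E.filter (fun e => e.1 = i), grad x e * grad y e|
          ≤ ∑ e ∈ E.filter (fun e => e.1 = i), |grad x e| * |grad y e| := by
            refine le_trans (Finset.abs_sum_le_sum_abs _ _) ?_
            exact Finset.sum_le_sum fun e _ => le_of_eq (abs_mul _ _)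
        _ ≤ lpEdge p (E.filter fun e => e.1 = i) (grad x) *
              lpEdge q (E.filter fun e => e.1 = i) (grad y) :=
            LeibnizAux.holder_edge p q hp hpq _ _ _
        _ ≤ r i * H := by
            refine mul_le_mul_of_nonneg_left ?_ (hrn i)
            exact LeibnizAux.lpEdge_filter_le_hybrid q E (grad y) i
  have habs : ∀ (f : Fin n → ℝ), lpVert p (fun i => |f i|) = lpVert p f := by
    intro f
    unfold lpVert
    simp [abs_abs]
  calc lpVert p (L.mulVec (x * y))
      ≤ lpVert p (fun i => |L.mulVec x i| * C1 + |x i| * C2 + r i * H) := by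
        refine LeibnizAux.lpVert_mono p fun i => ?_
        have hnn : 0 ≤ |L.mulVec x i| * C1 + |x i| * C2 + r i * H :=
          add_nonneg (add_nonneg (mul_nonneg (abs_nonneg _) hC1n)
            (mul_nonneg (abs_nonneg _) hC2n)) (mul_nonneg (hrn i) hHn)
        rw [abs_of_nonneg hnn]
        exact hbound i
    _ ≤ lpVert p (fun i => |L.mulVec x i| * C1) + lpVert p (fun i => |x i| * C2)
          + lpVert p (fun i => r i * H) :=
        LeibnizAux.lpVert_add3_le p hp _ _ _ (fun i => mul_nonneg (abs_nonneg _) hC1n)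
          (fun i => mul_nonneg (abs_nonneg _) hC2n) (fun i => mul_nonneg (hrn i) hHn)
    _ ≤ lpVert p (L.mulVec x) * C1 + lpVert p x * C2 + lpEdge p E (grad x) * H := by
        refine add_le_add (add_le_add ?_ ?_) ?_
        · exact le_trans (LeibnizAux.lpVert_mul_const_le p hp _ hC1n)
            (le_of_eq (by rw [habs]))
        · exact le_trans (LeibnizAux.lpVert_mul_const_le p hp _ hC2n)
            (le_of_eq (by rw [habs]))
        · refine le_trans (LeibnizAux.lpVert_mul_const_le p hp _ hHn) ?_
          exact mul_le_mul_of_nonneg_right (LeibnizAux.row_norms_le p hp E (grad x)) hHn
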